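/- arXiv:1908.07530 — 2 statements merged into one kernel-verified Lean document; each statement's English description precedes it below -/
import Mathlib

section
/- Let Λ be a finite set, q ≥ 2, and let W and Θ be potentials on Λ. For any 0 < κ′ < κ, the potential ad_W Θ, with components (ad_W Θ)_Z = Σ_{Z₁ ∪ Z₂ = Z, Z₁ ∩ Z₂ ≠ ∅} [W_{Z₁}, Θ_{Z₂}], satisfies ‖ad_W Θ‖_{κ′} ≤ (18 / (κ′(κ − κ′))) · ‖Θ‖_{κ} · ‖W‖_{κ}. -/
/-!
Bound each commutator by `‖[W_{Z₁}, Θ_{Z₂}]‖ ≤ 2 ‖W_{Z₁}‖ ‖Θ_{Z₂}‖` and regroup the sum over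
`Z ∋ x` into a sum over overlapping pairs `(Z₁, Z₂)` with `x ∈ Z₁` or `x ∈ Z₂`; by symmetry it
suffices to treat `x ∈ Z₁`. Overlap gives `|Z₁ ∪ Z₂| ≤ |Z₁| + |Z₂| - 1` and is witnessed by a
site `y ∈ Z₁ ∩ Z₂`, so for fixed `Z₁` the sum over `Z₂` is at most
`|Z₁| e^{κ'(|Z₁| - 1)} ‖W_{Z₁}‖ ‖Θ‖_κ`. Finally `t e^{-t} ≤ 1` turns
`|Z₁| e^{-κ'} e^{-(κ - κ')|Z₁|}` into `1 / (κ'(κ - κ'))`, which gives the constant `4 ≤ 18`.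
-/

open scoped Matrix.Norms.L2Operator

noncomputable section

/-- Operators on the many-body Hilbert space `ℂ^(Λ → Fin q)`, with the ℓ²→ℓ² operator
norm. -/
abbrev Op (Λ : Type*) [Fintype Λ] [DecidableEq Λ] (q : ℕ) : Type _ :=
  Matrix (Λ → Fin q) (Λ → Fin q) ℂ

variable {Λ : Type*} [Fintype Λ] [DecidableEq Λ] {q : ℕ}

/-- `A` is supported on `Z ⊆ Λ`. -/
def SupportedOn (A : Op Λ q) (Z : Finset Λ) : Prop :=
  (∀ f g : Λ → Fin q, (∃ x, x ∉ Z ∧ f x ≠ g x) → A f g = 0) ∧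
  (∀ f g f' g' : Λ → Fin q,
    (∀ x ∉ Z, f x = g x) → (∀ x ∉ Z, f' x = g' x) →
    (∀ x ∈ Z, f' x = f x) → (∀ x ∈ Z, g' x = g x) → A f' g' = A f g)

/-- A potential is a family `Φ = (Φ_Z)` of operators with `Φ_Z` supported on `Z`. -/
def IsPotential (Φ : Finset Λ → Op Λ q) : Prop := ∀ Z, SupportedOn (Φ Z) Z

/-- The norm `‖Φ‖_κ = max_{x∈Λ} Σ_{Z ∋ x} e^{κ|Z|} ‖Φ_Z‖` of a potential. -/
def potNorm (κ : ℝ) (Φ : Finset Λ → Op Λ q) : ℝ :=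
  ⨆ x : Λ, ∑ Z ∈ Finset.univ.filter (fun Z : Finset Λ => x ∈ Z),
    Real.exp (κ * Z.card) * ‖Φ Z‖

/-- The potential `ad_W Θ` with components
`(ad_W Θ)_Z = Σ_{Z₁ ∪ Z₂ = Z, Z₁ ∩ Z₂ ≠ ∅} [W_{Z₁}, Θ_{Z₂}]`. -/
def adPot (W Θ : Finset Λ → Op Λ q) : Finset Λ → Op Λ q := fun Z =>
  ∑ p ∈ (Finset.univ : Finset (Finset Λ × Finset Λ)).filter
      (fun p => p.1 ∪ p.2 = Z ∧ (p.1 ∩ p.2).Nonempty),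
    (W p.1 * Θ p.2 - Θ p.2 * W p.1)

open Finset

theorem norm_mul_sub_mul_le {R : Type*} [NonUnitalSeminormedRing R] (a b : R) :
    ‖a * b - b * a‖ ≤ 2 * (‖a‖ * ‖b‖) := by
  calc ‖a * b - b * a‖ ≤ ‖a‖ * ‖b‖ + ‖b‖ * ‖a‖ :=
        (norm_sub_le _ _).trans (add_le_add (norm_mul_le _ _) (norm_mul_le _ _))
    _ = 2 * (‖a‖ * ‖b‖) := by ring

theorem mul_exp_neg_mul_le {δ : ℝ} (hδ : 0 < δ) (t : ℝ) : t * Real.exp (-(δ * t)) ≤ δ⁻¹ := by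
  have h := (Real.mul_exp_neg_le_exp_neg_one (δ * t)).trans
    (Real.exp_le_one_iff.mpr (by norm_num))
  calc t * Real.exp (-(δ * t)) = δ⁻¹ * (δ * t * Real.exp (-(δ * t))) := by field_simp
    _ ≤ δ⁻¹ := mul_le_of_le_one_right (inv_nonneg.mpr hδ.le) h

theorem natCast_mul_exp_le {κ' κ : ℝ} (hκ' : 0 < κ') (hκ : κ' < κ) (n : ℕ) :
    n * Real.exp (κ' * (n - 1)) ≤ Real.exp (κ * n) / (κ' * (κ - κ')) := by
  have hδ : 0 < κ - κ' := sub_pos.mpr hκ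
  calc (n : ℝ) * Real.exp (κ' * (n - 1))
      = Real.exp (κ * n) * ((1 * Real.exp (-(κ' * 1))) * (n * Real.exp (-((κ - κ') * n)))) := by
        have : κ' * (n - 1) = κ * n + (-(κ' * 1) + -((κ - κ') * n)) := by ring
        rw [this, Real.exp_add, Real.exp_add]; ring
    _ ≤ Real.exp (κ * n) * (κ'⁻¹ * (κ - κ')⁻¹) := by
        gcongr ?_ * (?_ * ?_)
        · exact mul_exp_neg_mul_le hκ' 1
        · exact mul_exp_neg_mul_le hδ n
    _ = Real.exp (κ * n) / (κ' * (κ - κ')) := by rw [div_eq_mul_inv, mul_inv]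

theorem exp_mul_card_union_le {α : Type*} [DecidableEq α] {κ : ℝ} (hκ : 0 ≤ κ)
    {Z₁ Z₂ : Finset α} (h : (Z₁ ∩ Z₂).Nonempty) :
    Real.exp (κ * #(Z₁ ∪ Z₂)) ≤ Real.exp (κ * (#Z₁ - 1)) * Real.exp (κ * #Z₂) := by
  rw [← Real.exp_add, Real.exp_le_exp, ← mul_add]
  have := card_union_add_card_inter Z₁ Z₂
  have := h.card_pos
  gcongr
  rw [sub_add_eq_add_sub, le_sub_iff_add_le]
  exact_mod_cast (by omega : #(Z₁ ∪ Z₂) + 1 ≤ #Z₁ + #Z₂)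

theorem sum_inter_nonempty_le_sum_sum_mem (A : Finset Λ) {g : Finset Λ → ℝ} (hg : 0 ≤ g) :
    ∑ B with (A ∩ B).Nonempty, g B ≤ ∑ y ∈ A, ∑ B with y ∈ B, g B := by
  -- the right side counts each `B` exactly `#(A ∩ B)` times
  rw [sum_comm' (t' := univ) (s' := fun B => A ∩ B) (by simp), sum_filter]
  refine sum_le_sum fun B _ => ?_
  split_ifs with h
  · rw [sum_const, nsmul_eq_mul]
    exact le_mul_of_one_le_left (hg B) (by exact_mod_cast h.card_pos)
  · exact sum_nonneg fun _ _ => hg B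

theorem sum_filter_or_le {ι : Type*} [DecidableEq ι] (s : Finset ι) (P Q : ι → Prop)
    [DecidablePred P] [DecidablePred Q] {f : ι → ℝ} (hf : 0 ≤ f) :
    ∑ i ∈ s with P i ∨ Q i, f i ≤ ∑ i ∈ s with P i, f i + ∑ i ∈ s with Q i, f i := by
  rw [filter_or, ← sum_union_inter]
  exact le_add_of_nonneg_right (sum_nonneg fun i _ => hf i)

theorem sum_mem_sum_union_eq_sum_mem_union (x : Λ) (P : Finset Λ × Finset Λ → Prop)
    [DecidablePred P] (f : Finset Λ × Finset Λ → ℝ) :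
    ∑ Z with x ∈ Z, ∑ p with p.1 ∪ p.2 = Z ∧ P p, f p = ∑ p with x ∈ p.1 ∪ p.2 ∧ P p, f p := by
  rw [sum_comm' (t' := {p | x ∈ p.1 ∪ p.2 ∧ P p}) (s' := fun p => {p.1 ∪ p.2})]
  · simp only [sum_singleton]
  · intro Z p
    simp only [mem_filter, mem_univ, true_and, mem_singleton]
    constructor
    · rintro ⟨hx, rfl, hp⟩; exact ⟨rfl, hx, hp⟩
    · rintro ⟨rfl, hx, hp⟩; exact ⟨hx, rfl, hp⟩

theorem potNorm_nonneg (κ : ℝ) (Φ : Finset Λ → Op Λ q) : 0 ≤ potNorm κ Φ :=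
  Real.iSup_nonneg fun _ => sum_nonneg fun _ _ => by positivity

theorem sum_mem_le_potNorm (κ : ℝ) (Φ : Finset Λ → Op Λ q) (x : Λ) :
    ∑ Z with x ∈ Z, Real.exp (κ * #Z) * ‖Φ Z‖ ≤ potNorm κ Φ := by
  unfold potNorm
  exact le_ciSup (f := fun x => ∑ Z with x ∈ Z, Real.exp (κ * #Z) * ‖Φ Z‖)
    (Finite.bddAbove_range _) x

theorem potNorm_le {κ C : ℝ} {Φ : Finset Λ → Op Λ q} (hC : 0 ≤ C)
    (h : ∀ x, ∑ Z with x ∈ Z, Real.exp (κ * #Z) * ‖Φ Z‖ ≤ C) : potNorm κ Φ ≤ C :=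
  Real.iSup_le h hC

theorem sum_exp_mul_card_union_mul_norm_le {κ' κ : ℝ} (hκ' : 0 < κ') (hκ : κ' < κ)
    (U V : Finset Λ → Op Λ q) (x : Λ) :
    ∑ p : Finset Λ × Finset Λ with x ∈ p.1 ∧ (p.1 ∩ p.2).Nonempty,
        Real.exp (κ' * #(p.1 ∪ p.2)) * (‖U p.1‖ * ‖V p.2‖)
      ≤ potNorm κ U * potNorm κ V / (κ' * (κ - κ')) := by
  have hδ : 0 < κ - κ' := sub_pos.mpr hκ
  set c := potNorm κ V / (κ' * (κ - κ'))
  have inner (Z₁ : Finset Λ) :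
      ∑ Z₂ with (Z₁ ∩ Z₂).Nonempty, Real.exp (κ' * #(Z₁ ∪ Z₂)) * (‖U Z₁‖ * ‖V Z₂‖)
        ≤ c * (Real.exp (κ * #Z₁) * ‖U Z₁‖) := by
    set a := Real.exp (κ' * (#Z₁ - 1)) * ‖U Z₁‖
    calc _ ≤ ∑ y ∈ Z₁, ∑ Z₂ with y ∈ Z₂, Real.exp (κ' * #(Z₁ ∪ Z₂)) * (‖U Z₁‖ * ‖V Z₂‖) :=
          sum_inter_nonempty_le_sum_sum_mem Z₁ fun _ => by positivity
      _ ≤ ∑ y ∈ Z₁, ∑ Z₂ with y ∈ Z₂, a * (Real.exp (κ * #Z₂) * ‖V Z₂‖) := by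
          refine sum_le_sum fun y hy => sum_le_sum fun Z₂ hZ₂ => ?_
          have hov : (Z₁ ∩ Z₂).Nonempty := ⟨y, mem_inter.2 ⟨hy, (mem_filter.1 hZ₂).2⟩⟩
          calc Real.exp (κ' * #(Z₁ ∪ Z₂)) * (‖U Z₁‖ * ‖V Z₂‖)
              ≤ Real.exp (κ' * (#Z₁ - 1)) * Real.exp (κ * #Z₂) * (‖U Z₁‖ * ‖V Z₂‖) := by
                gcongr
                exact (exp_mul_card_union_le hκ'.le hov).trans (by gcongr)
            _ = a * (Real.exp (κ * #Z₂) * ‖V Z₂‖) := by ring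
      _ ≤ ∑ y ∈ Z₁, a * potNorm κ V := by
          simp_rw [← mul_sum]
          gcongr with y
          exact sum_mem_le_potNorm κ V y
      _ = #Z₁ * Real.exp (κ' * (#Z₁ - 1)) * ‖U Z₁‖ * potNorm κ V := by
          rw [sum_const, nsmul_eq_mul]; ring
      _ ≤ Real.exp (κ * #Z₁) / (κ' * (κ - κ')) * ‖U Z₁‖ * potNorm κ V := by
          gcongr
          · exact potNorm_nonneg κ V
          · exact natCast_mul_exp_le hκ' hκ _
      _ = c * (Real.exp (κ * #Z₁) * ‖U Z₁‖) := by ring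
  rw [sum_finset_product _ {Z₁ | x ∈ Z₁} (fun Z₁ => {Z₂ | (Z₁ ∩ Z₂).Nonempty}) (by simp)]
  calc _ ≤ ∑ Z₁ with x ∈ Z₁, c * (Real.exp (κ * #Z₁) * ‖U Z₁‖) :=
        sum_le_sum fun Z₁ _ => inner Z₁
    _ ≤ c * potNorm κ U := by
        rw [← mul_sum]
        gcongr
        · exact div_nonneg (potNorm_nonneg κ V) (by positivity)
        · exact sum_mem_le_potNorm κ U x
    _ = potNorm κ U * potNorm κ V / (κ' * (κ - κ')) := by ring

theorem exp_mul_card_mul_norm_adPot_le (κ : ℝ) (W Θ : Finset Λ → Op Λ q) (Z : Finset Λ) :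
    Real.exp (κ * #Z) * ‖adPot W Θ Z‖ ≤
      ∑ p : Finset Λ × Finset Λ with p.1 ∪ p.2 = Z ∧ (p.1 ∩ p.2).Nonempty,
        2 * (Real.exp (κ * #(p.1 ∪ p.2)) * (‖W p.1‖ * ‖Θ p.2‖)) := by
  calc Real.exp (κ * #Z) * ‖adPot W Θ Z‖
      ≤ Real.exp (κ * #Z) *
          ∑ p : Finset Λ × Finset Λ with p.1 ∪ p.2 = Z ∧ (p.1 ∩ p.2).Nonempty,
            2 * (‖W p.1‖ * ‖Θ p.2‖) := by
        gcongr
        exact (norm_sum_le _ _).trans (sum_le_sum fun p _ => norm_mul_sub_mul_le _ _)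
    _ = _ := by
        rw [mul_sum]
        refine sum_congr rfl fun p hp => ?_
        rw [(mem_filter.1 hp).2.1]
        ring

theorem potNorm_adPot_le_four {κ' κ : ℝ} (hκ' : 0 < κ') (hκ : κ' < κ)
    (W Θ : Finset Λ → Op Λ q) :
    potNorm κ' (adPot W Θ) ≤ 4 / (κ' * (κ - κ')) * potNorm κ Θ * potNorm κ W := by
  have hδ : 0 < κ - κ' := sub_pos.mpr hκ
  set F : Finset Λ × Finset Λ → ℝ := fun p =>
    2 * (Real.exp (κ' * #(p.1 ∪ p.2)) * (‖W p.1‖ * ‖Θ p.2‖))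
  have hF : 0 ≤ F := fun p => by positivity
  have hC : 0 ≤ 4 / (κ' * (κ - κ')) * potNorm κ Θ * potNorm κ W :=
    mul_nonneg (mul_nonneg (by positivity) (potNorm_nonneg κ Θ)) (potNorm_nonneg κ W)
  refine potNorm_le hC fun x => ?_
  have swap : ∑ p : Finset Λ × Finset Λ with x ∈ p.2 ∧ (p.1 ∩ p.2).Nonempty, F p =
      2 * ∑ p : Finset Λ × Finset Λ with x ∈ p.1 ∧ (p.1 ∩ p.2).Nonempty,
        Real.exp (κ' * #(p.1 ∪ p.2)) * (‖Θ p.1‖ * ‖W p.2‖) := by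
    rw [mul_sum]
    refine sum_equiv (Equiv.prodComm _ _) (by simp [inter_comm]) fun p _ => ?_
    simp only [F, Equiv.prodComm_apply, Prod.fst_swap, Prod.snd_swap, union_comm p.1]
    ring
  calc ∑ Z with x ∈ Z, Real.exp (κ' * #Z) * ‖adPot W Θ Z‖
      ≤ ∑ Z with x ∈ Z,
          ∑ p : Finset Λ × Finset Λ with p.1 ∪ p.2 = Z ∧ (p.1 ∩ p.2).Nonempty, F p :=
        sum_le_sum fun Z _ => exp_mul_card_mul_norm_adPot_le κ' W Θ Z
    _ = ∑ p : Finset Λ × Finset Λ with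
          (x ∈ p.1 ∧ (p.1 ∩ p.2).Nonempty) ∨ (x ∈ p.2 ∧ (p.1 ∩ p.2).Nonempty), F p := by
        rw [sum_mem_sum_union_eq_sum_mem_union]
        simp only [mem_union, or_and_right]
    _ ≤ _ := sum_filter_or_le _ _ _ hF
    _ ≤ 2 * (potNorm κ W * potNorm κ Θ / (κ' * (κ - κ')))
          + 2 * (potNorm κ Θ * potNorm κ W / (κ' * (κ - κ'))) := by
        rw [swap, ← mul_sum]
        gcongr
        · exact sum_exp_mul_card_union_mul_norm_le hκ' hκ W Θ x
        · exact sum_exp_mul_card_union_mul_norm_le hκ' hκ Θ W x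
    _ = 4 / (κ' * (κ - κ')) * potNorm κ Θ * potNorm κ W := by ring

theorem potNorm_adPot_le_general (κ' κ : ℝ) (hκ' : 0 < κ') (hκ : κ' < κ)
    (W Θ : Finset Λ → Op Λ q) :
    potNorm κ' (adPot W Θ) ≤ 18 / (κ' * (κ - κ')) * potNorm κ Θ * potNorm κ W := by
  have hδ : 0 < κ - κ' := sub_pos.mpr hκ
  refine (potNorm_adPot_le_four hκ' hκ W Θ).trans ?_
  refine mul_le_mul_of_nonneg_right (mul_le_mul_of_nonneg_right ?_ (potNorm_nonneg κ Θ))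
    (potNorm_nonneg κ W)
  exact div_le_div_of_nonneg_right (by norm_num) (by positivity)

/-- Lemma 4.1 of Abanin et al.: for potentials `W`, `Θ` and `0 < κ′ < κ`,
`‖ad_W Θ‖_{κ′} ≤ (18/(κ′(κ − κ′))) ‖Θ‖_κ ‖W‖_κ`. -/
theorem potNorm_adPot_le (hq : 2 ≤ q) (κ' κ : ℝ) (hκ' : 0 < κ') (hκ : κ' < κ)
    (W Θ : Finset Λ → Op Λ q) (hW : IsPotential W) (hΘ : IsPotential Θ) :
    potNorm κ' (adPot W Θ) ≤ 18 / (κ' * (κ - κ')) * potNorm κ Θ * potNorm κ W :=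
  potNorm_adPot_le_general κ' κ hκ' hκ W Θ

end
end

section
/- Let Λ be a finite metric space, σ > 0, R_l = e^{σl}, κ > 0, γ > 0, and let Φ be a range-indexed potential on Λ with ‖Φ‖_{κ,γ} < ∞. Define Φ_Z = Σ_{l=0}^∞ Φ_{Z,l} (the series converges absolutely in operator norm). Then for every x ∈ Λ and every r > 0: (i) Σ over all Z ∋ x with diam(Z) ≥ r of ‖Φ_Z‖ is at most e^{−γ} γ^γ (κ r)^{−γ} ‖Φ‖_{κ,γ}; and (ii) Σ_{y ∈ Λ} Σ over all Z containing both x and y of ‖Φ_Z‖ is at most κ^{−1} ‖Φ‖_{κ,γ}. -/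
open scoped Matrix.Norms.L2Operator

noncomputable section

variable {Λ : Type*} [Fintype Λ] [DecidableEq Λ] [MetricSpace Λ] {q : ℕ}

/-- A finite subset `Z` of a metric space is `R`-ranged if every pair of its points is
connected by a finite sequence of points of `Z` making jumps of size at most `R`. -/
def IsRanged {M : Type*} [MetricSpace M] (Z : Finset M) (R : ℝ) : Prop :=
  ∀ x ∈ Z, ∀ y ∈ Z, ∃ (n : ℕ) (c : Fin (n + 1) → M),
    (∀ i, c i ∈ Z) ∧ c 0 = x ∧ c (Fin.last n) = y ∧
    ∀ i : Fin n, dist (c i.castSucc) (c i.succ) ≤ R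

/-- A range-indexed potential (with range hierarchy `R_l = e^{σl}`) is a family
`Φ = (Φ_{Z,l})` with `Φ_{Z,l}` supported on `Z` and vanishing unless `Z` is
`R_l`-ranged. -/
def IsRIPotential (σ : ℝ) (Φ : Finset Λ → ℕ → Op Λ q) : Prop :=
  ∀ Z l, SupportedOn (Φ Z l) Z ∧ (¬ IsRanged Z (Real.exp (σ * l)) → Φ Z l = 0)

/-- The `l`-th term, at site `x`, of the two-parameter norm of a range-indexed potential:
`R_l^γ Σ_{Z ∋ x} e^{κ|Z|} ‖Φ_{Z,l}‖`. -/
def riNormTerm (σ κ γ : ℝ) (Φ : Finset Λ → ℕ → Op Λ q) (x : Λ) (l : ℕ) : ℝ :=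
  Real.exp (σ * l) ^ γ *
    ∑ Z ∈ Finset.univ.filter (fun Z : Finset Λ => x ∈ Z),
      Real.exp (κ * Z.card) * ‖Φ Z l‖

/-- The two-parameter norm `‖Φ‖_{κ,γ} = max_{x∈Λ} Σ_l R_l^γ Σ_{Z ∋ x} e^{κ|Z|} ‖Φ_{Z,l}‖`
of a range-indexed potential. -/
def riNorm (σ κ γ : ℝ) (Φ : Finset Λ → ℕ → Op Λ q) : ℝ :=
  ⨆ x : Λ, ∑' l : ℕ, riNormTerm σ κ γ Φ x l

/-- Finiteness (summability) of the series defining `‖Φ‖_{κ,γ}`. -/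
def RINormSummable (σ κ γ : ℝ) (Φ : Finset Λ → ℕ → Op Λ q) : Prop :=
  ∀ x : Λ, Summable (riNormTerm σ κ γ Φ x)

/-!
A nonzero term `Φ_{Z,l}` forces `Z` to be `R_l`-ranged. Joining the points of `Z` at distance at
most `R_l` gives a connected graph on `Z`, whose paths have fewer than `|Z|` edges, so
`diam Z ≤ |Z| R_l`. Hence `diam Z ≥ r` gives `(κr)^γ ≤ (κ|Z|)^γ R_l^γ ≤ (γ/e)^γ e^{κ|Z|} R_l^γ`,
the last step because `t^γ e^{-t}` is maximal at `t = γ`. In (ii) each `Z` is counted once for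
every `y ∈ Z`, and `|Z| ≤ κ⁻¹ e^{κ|Z|}`. In both cases the weight carried by `‖Φ_{Z,l}‖` is
dominated by a multiple of `R_l^γ e^{κ|Z|}`, and summing over `l` and `Z ∋ x` gives `‖Φ‖_{κ,γ}`.
-/

section RangeGraph

variable {M : Type*} [MetricSpace M]

def rangeGraph (Z : Finset M) (R : ℝ) : SimpleGraph Z :=
  SimpleGraph.fromRel fun a b => dist (a : M) b ≤ R

theorem rangeGraph.dist_le_length_mul {Z : Finset M} {R : ℝ} {a b : Z}
    (p : (rangeGraph Z R).Walk a b) : dist (a : M) b ≤ p.length * R := by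
  induction p with
  | nil => simp
  | @cons a b c hadj p ih =>
    have hab : dist (a : M) b ≤ R := by
      rcases ((SimpleGraph.fromRel_adj _ _ _).mp hadj).2 with h | h
      · exact h
      · rwa [dist_comm]
    calc dist (a : M) c ≤ dist (a : M) b + dist (b : M) c := dist_triangle _ _ _
      _ ≤ R + p.length * R := add_le_add hab ih
      _ = (p.cons _).length * R := by simp only [SimpleGraph.Walk.length_cons]; push_cast; ring

theorem IsRanged.rangeGraph_reachable {Z : Finset M} {R : ℝ} (hZ : IsRanged Z R) (a b : Z) :
    (rangeGraph Z R).Reachable a b := by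
  obtain ⟨n, c, hcZ, hc0, hcn, hjump⟩ := hZ a a.2 b b.2
  have hreach : ∀ i, (rangeGraph Z R).Reachable a ⟨c i, hcZ i⟩ := by
    intro i
    induction i using Fin.induction with
    | zero => simp only [hc0]; rfl
    | succ i ih =>
      refine ih.trans ?_
      by_cases hne : c i.castSucc = c i.succ
      · simp only [hne]; rfl
      · exact SimpleGraph.Adj.reachable <| (SimpleGraph.fromRel_adj _ _ _).mpr
          ⟨fun h => hne (congrArg Subtype.val h), .inl (hjump i)⟩
  simpa only [hcn] using hreach (Fin.last n)

theorem IsRanged.dist_le {Z : Finset M} {R : ℝ} (hR : 0 ≤ R) (hZ : IsRanged Z R)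
    {x y : M} (hx : x ∈ Z) (hy : y ∈ Z) : dist x y ≤ Z.card * R := by
  classical
  obtain ⟨p⟩ := hZ.rangeGraph_reachable ⟨x, hx⟩ ⟨y, hy⟩
  have hlen : p.bypass.length ≤ Z.card := by
    simpa only [Fintype.card_coe] using p.bypass_isPath.length_lt.le
  calc dist x y ≤ p.bypass.length * R := rangeGraph.dist_le_length_mul p.bypass
    _ ≤ Z.card * R := by gcongr

theorem IsRanged.diam_le {Z : Finset M} {R : ℝ} (hR : 0 ≤ R) (hZ : IsRanged Z R) :
    Metric.diam (Z : Set M) ≤ Z.card * R :=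
  Metric.diam_le_of_forall_dist_le (by positivity) fun _ hx _ hy => hZ.dist_le hR hx hy

end RangeGraph

theorem Real.rpow_le_rpow_self_mul_exp_sub {t γ : ℝ} (ht : 0 < t) (hγ : 0 < γ) :
    t ^ γ ≤ γ ^ γ * Real.exp (t - γ) := by
  rw [Real.rpow_def_of_pos ht, Real.rpow_def_of_pos hγ, ← Real.exp_add, Real.exp_le_exp]
  have h := mul_le_mul_of_nonneg_right (Real.log_le_sub_one_of_pos (div_pos ht hγ)) hγ.le
  rw [Real.log_div ht.ne' hγ.ne', sub_one_mul, div_mul_cancel₀ t hγ.ne'] at h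
  linarith

theorem Finset.sum_sum_filter_mem_and_mem {α β : Type*} [Fintype α] [DecidableEq α]
    [AddCommMonoid β] (x : α) (f : Finset α → β) :
    ∑ y : α, ∑ Z ∈ Finset.univ.filter (fun Z : Finset α => x ∈ Z ∧ y ∈ Z), f Z =
      ∑ Z ∈ Finset.univ.filter (fun Z : Finset α => x ∈ Z), Z.card • f Z := by
  simp only [Finset.sum_filter, ite_and]
  rw [Finset.sum_comm]
  refine Finset.sum_congr rfl fun Z _ => ?_
  by_cases hx : x ∈ Z
  · simp [hx, Finset.sum_ite_mem]
  · simp [hx]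

section RIPotential

variable {α : Type*} {σ κ γ : ℝ}

/-- The weight `R_l^γ e^{κ|Z|}` of `‖Φ_{Z,l}‖` in the two-parameter norm. -/
def riWeight (σ κ γ : ℝ) (Z : Finset α) (l : ℕ) : ℝ :=
  Real.exp (σ * l) ^ γ * Real.exp (κ * Z.card)

theorem riWeight_nonneg (Z : Finset α) (l : ℕ) : 0 ≤ riWeight σ κ γ Z l := by
  unfold riWeight; positivity

theorem exp_le_riWeight (hσ : 0 ≤ σ) (hγ : 0 ≤ γ) (Z : Finset α) (l : ℕ) :
    Real.exp (κ * Z.card) ≤ riWeight σ κ γ Z l :=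
  le_mul_of_one_le_left (Real.exp_pos _).le
    (Real.one_le_rpow (Real.one_le_exp (by positivity)) hγ)

theorem one_le_riWeight (hσ : 0 ≤ σ) (hκ : 0 ≤ κ) (hγ : 0 ≤ γ) (Z : Finset α) (l : ℕ) :
    1 ≤ riWeight σ κ γ Z l :=
  (Real.one_le_exp (by positivity)).trans (exp_le_riWeight hσ hγ Z l)

section Potential

variable [Fintype α] [DecidableEq α] {Φ : Finset α → ℕ → Op α q}

theorem riNormTerm_eq_sum (x : α) (l : ℕ) :
    riNormTerm σ κ γ Φ x l =
      ∑ Z ∈ Finset.univ.filter (fun Z : Finset α => x ∈ Z), riWeight σ κ γ Z l * ‖Φ Z l‖ := by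
  simp only [riNormTerm, riWeight, Finset.mul_sum, mul_assoc]

theorem riWeight_mul_norm_le_riNormTerm {x : α} {Z : Finset α} (hx : x ∈ Z) (l : ℕ) :
    riWeight σ κ γ Z l * ‖Φ Z l‖ ≤ riNormTerm σ κ γ Φ x l := by
  rw [riNormTerm_eq_sum]
  exact Finset.single_le_sum (f := fun Z => riWeight σ κ γ Z l * ‖Φ Z l‖)
    (fun Z _ => mul_nonneg (riWeight_nonneg Z l) (norm_nonneg _)) (by simpa using hx)

theorem RINormSummable.summable_riWeight_mul_norm (hsum : RINormSummable σ κ γ Φ) {x : α}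
    {Z : Finset α} (hx : x ∈ Z) : Summable fun l => riWeight σ κ γ Z l * ‖Φ Z l‖ :=
  (hsum x).of_nonneg_of_le (fun l => mul_nonneg (riWeight_nonneg Z l) (norm_nonneg _))
    (riWeight_mul_norm_le_riNormTerm hx)

theorem RINormSummable.summable_norm (hσ : 0 ≤ σ) (hκ : 0 ≤ κ) (hγ : 0 ≤ γ)
    (hsum : RINormSummable σ κ γ Φ) {Z : Finset α} (hZ : Z.Nonempty) :
    Summable fun l => ‖Φ Z l‖ :=
  (hsum.summable_riWeight_mul_norm hZ.choose_spec).of_nonneg_of_le (fun _ => norm_nonneg _)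
    fun l => le_mul_of_one_le_left (norm_nonneg _) (one_le_riWeight hσ hκ hγ Z l)

theorem RINormSummable.sum_tsum_le_riNorm (hsum : RINormSummable σ κ γ Φ) {x : α}
    {s : Finset (Finset α)} (hs : ∀ Z ∈ s, x ∈ Z) :
    ∑ Z ∈ s, ∑' l, riWeight σ κ γ Z l * ‖Φ Z l‖ ≤ riNorm σ κ γ Φ := by
  have hsumZ : ∀ Z ∈ s, Summable fun l => riWeight σ κ γ Z l * ‖Φ Z l‖ :=
    fun Z hZ => hsum.summable_riWeight_mul_norm (hs Z hZ)
  rw [← Summable.tsum_finsetSum hsumZ]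
  calc ∑' l, ∑ Z ∈ s, riWeight σ κ γ Z l * ‖Φ Z l‖ ≤ ∑' l, riNormTerm σ κ γ Φ x l := by
        refine Summable.tsum_le_tsum (fun l => ?_) (summable_sum hsumZ) (hsum x)
        rw [riNormTerm_eq_sum]
        exact Finset.sum_le_sum_of_subset_of_nonneg (fun Z hZ => by simpa using hs Z hZ)
          fun Z _ _ => mul_nonneg (riWeight_nonneg Z l) (norm_nonneg _)
    _ ≤ riNorm σ κ γ Φ :=
        le_ciSup (Set.finite_range fun y => ∑' l, riNormTerm σ κ γ Φ y l).bddAbove x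

theorem RINormSummable.sum_mul_norm_tsum_le (hσ : 0 ≤ σ) (hκ : 0 ≤ κ) (hγ : 0 ≤ γ)
    (hsum : RINormSummable σ κ γ Φ) {x : α} {s : Finset (Finset α)} (hs : ∀ Z ∈ s, x ∈ Z)
    {a : Finset α → ℝ} {C : ℝ} (ha : ∀ Z ∈ s, 0 ≤ a Z) (hC : 0 ≤ C)
    (haC : ∀ Z ∈ s, ∀ l, Φ Z l ≠ 0 → a Z ≤ C * riWeight σ κ γ Z l) :
    ∑ Z ∈ s, a Z * ‖∑' l, Φ Z l‖ ≤ C * riNorm σ κ γ Φ := by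
  have hterm : ∀ Z ∈ s, a Z * ‖∑' l, Φ Z l‖ ≤ C * ∑' l, riWeight σ κ γ Z l * ‖Φ Z l‖ := by
    intro Z hZ
    have hnorm := hsum.summable_norm hσ hκ hγ ⟨x, hs Z hZ⟩
    calc a Z * ‖∑' l, Φ Z l‖ ≤ ∑' l, a Z * ‖Φ Z l‖ := by
          rw [tsum_mul_left]
          exact mul_le_mul_of_nonneg_left (norm_tsum_le_tsum_norm hnorm) (ha Z hZ)
      _ ≤ ∑' l, C * (riWeight σ κ γ Z l * ‖Φ Z l‖) := by
          refine Summable.tsum_le_tsum (fun l => ?_) (hnorm.mul_left _)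
            ((hsum.summable_riWeight_mul_norm (hs Z hZ)).mul_left C)
          by_cases hΦ : Φ Z l = 0
          · simp [hΦ]
          · rw [← mul_assoc]
            exact mul_le_mul_of_nonneg_right (haC Z hZ l hΦ) (norm_nonneg _)
      _ = C * ∑' l, riWeight σ κ γ Z l * ‖Φ Z l‖ := tsum_mul_left
  calc ∑ Z ∈ s, a Z * ‖∑' l, Φ Z l‖
        ≤ ∑ Z ∈ s, C * ∑' l, riWeight σ κ γ Z l * ‖Φ Z l‖ := Finset.sum_le_sum hterm
    _ = C * ∑ Z ∈ s, ∑' l, riWeight σ κ γ Z l * ‖Φ Z l‖ := (Finset.mul_sum ..).symm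
    _ ≤ C * riNorm σ κ γ Φ := mul_le_mul_of_nonneg_left (hsum.sum_tsum_le_riNorm hs) hC

end Potential

theorem one_le_decay_mul_riWeight [MetricSpace α] (hκ : 0 < κ) (hγ : 0 < γ) {r : ℝ}
    (hr : 0 < r) {Z : Finset α} (hZ : Z.Nonempty) {l : ℕ} (hranged : IsRanged Z (Real.exp (σ * l)))
    (hdiam : r ≤ Metric.diam (Z : Set α)) :
    1 ≤ Real.exp (-γ) * γ ^ γ * (κ * r) ^ (-γ) * riWeight σ κ γ Z l := by
  have hcard : (0 : ℝ) < Z.card := by exact_mod_cast hZ.card_pos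
  have hrange : κ * r ≤ κ * Z.card * Real.exp (σ * l) := by
    rw [mul_assoc]
    exact mul_le_mul_of_nonneg_left (hdiam.trans (hranged.diam_le (Real.exp_pos _).le)) hκ.le
  have hpow : (κ * r) ^ γ ≤ Real.exp (-γ) * γ ^ γ * riWeight σ κ γ Z l :=
    calc (κ * r) ^ γ ≤ (κ * Z.card) ^ γ * Real.exp (σ * l) ^ γ := by
          rw [← Real.mul_rpow (by positivity) (Real.exp_pos _).le]
          exact Real.rpow_le_rpow (by positivity) hrange hγ.le
      _ ≤ γ ^ γ * Real.exp (κ * Z.card - γ) * Real.exp (σ * l) ^ γ := by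
          gcongr; exact Real.rpow_le_rpow_self_mul_exp_sub (by positivity) hγ
      _ = Real.exp (-γ) * γ ^ γ * riWeight σ κ γ Z l := by
          rw [riWeight, sub_eq_add_neg, Real.exp_add]; ring
  calc 1 = (κ * r) ^ (-γ) * (κ * r) ^ γ := by
        rw [← Real.rpow_add (by positivity), neg_add_cancel, Real.rpow_zero]
    _ ≤ (κ * r) ^ (-γ) * (Real.exp (-γ) * γ ^ γ * riWeight σ κ γ Z l) := by gcongr
    _ = _ := by ring

theorem card_le_inv_mul_riWeight (hσ : 0 ≤ σ) (hκ : 0 < κ) (hγ : 0 ≤ γ) (Z : Finset α)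
    (l : ℕ) : (Z.card : ℝ) ≤ κ⁻¹ * riWeight σ κ γ Z l := by
  rw [le_inv_mul_iff₀ hκ]
  calc κ * Z.card ≤ Real.exp (κ * Z.card) := by linarith [Real.add_one_le_exp (κ * Z.card)]
    _ ≤ riWeight σ κ γ Z l := exp_le_riWeight hσ hγ Z l

end RIPotential

open Classical in
theorem riPotential_decay_bounds_general (σ κ γ : ℝ)
    (hσ : 0 < σ) (hκ : 0 < κ) (hγ : 0 < γ)
    (Φ : Finset Λ → ℕ → Op Λ q) (hΦ : IsRIPotential σ Φ)
    (hsum : RINormSummable σ κ γ Φ) :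
    (∀ Z : Finset Λ, Z.Nonempty → Summable fun l : ℕ => ‖Φ Z l‖) ∧
    ∀ (x : Λ) (r : ℝ), 0 < r →
      (∑ Z ∈ Finset.univ.filter
          (fun Z : Finset Λ => x ∈ Z ∧ r ≤ Metric.diam (Z : Set Λ)),
          ‖∑' l : ℕ, Φ Z l‖)
        ≤ Real.exp (-γ) * γ ^ γ * (κ * r) ^ (-γ) * riNorm σ κ γ Φ ∧
      (∑ y : Λ, ∑ Z ∈ Finset.univ.filter
          (fun Z : Finset Λ => x ∈ Z ∧ y ∈ Z), ‖∑' l : ℕ, Φ Z l‖)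
        ≤ κ⁻¹ * riNorm σ κ γ Φ := by
  refine ⟨fun Z hZ => hsum.summable_norm hσ.le hκ.le hγ.le hZ, fun x r hr => ⟨?_, ?_⟩⟩
  · simpa only [one_mul] using hsum.sum_mul_norm_tsum_le hσ.le hκ.le hγ.le (a := fun _ => 1)
      (fun Z hZ => (Finset.mem_filter.mp hZ).2.1) (fun _ _ => zero_le_one) (by positivity)
      fun Z hZ l hΦZl => by
        obtain ⟨-, hxZ, hdiam⟩ := Finset.mem_filter.mp hZ
        exact one_le_decay_mul_riWeight hκ hγ hr ⟨x, hxZ⟩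
          (not_imp_comm.mp (hΦ Z l).2 hΦZl) hdiam
  · rw [Finset.sum_sum_filter_mem_and_mem]
    simp_rw [nsmul_eq_mul]
    exact hsum.sum_mul_norm_tsum_le hσ.le hκ.le hγ.le
      (fun Z hZ => (Finset.mem_filter.mp hZ).2) (fun _ _ => Nat.cast_nonneg _)
      (inv_nonneg.mpr hκ.le) fun Z _ l _ => card_le_inv_mul_riWeight hσ.le hκ hγ.le Z l

open Classical in
/-- A range-indexed potential with finite two-parameter norm `‖Φ‖_{κ,γ}` defines a
potential `Φ_Z = Σ_l Φ_{Z,l}` (the series converging absolutely in operator norm for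
nonempty `Z`), whose terms obey:
(i) a power-law decay with range, `Σ_{Z ∋ x, diam(Z) ≥ r} ‖Φ_Z‖ ≤ e^{−γ}γ^γ (κr)^{−γ} ‖Φ‖_{κ,γ}`;
(ii) a bound on the interactions coupling pairs of sites,
`Σ_y Σ_{Z ∋ x,y} ‖Φ_Z‖ ≤ κ⁻¹ ‖Φ‖_{κ,γ}`.
These verify the hypotheses of the multi-body long-range Lieb–Robinson bound. -/
theorem riPotential_decay_bounds (hq : 2 ≤ q) (σ κ γ : ℝ)
    (hσ : 0 < σ) (hκ : 0 < κ) (hγ : 0 < γ)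
    (Φ : Finset Λ → ℕ → Op Λ q) (hΦ : IsRIPotential σ Φ)
    (hsum : RINormSummable σ κ γ Φ) :
    (∀ Z : Finset Λ, Z.Nonempty → Summable fun l : ℕ => ‖Φ Z l‖) ∧
    ∀ (x : Λ) (r : ℝ), 0 < r →
      (∑ Z ∈ Finset.univ.filter
          (fun Z : Finset Λ => x ∈ Z ∧ r ≤ Metric.diam (Z : Set Λ)),
          ‖∑' l : ℕ, Φ Z l‖)
        ≤ Real.exp (-γ) * γ ^ γ * (κ * r) ^ (-γ) * riNorm σ κ γ Φ ∧
      (∑ y : Λ, ∑ Z ∈ Finset.univ.filter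
          (fun Z : Finset Λ => x ∈ Z ∧ y ∈ Z), ‖∑' l : ℕ, Φ Z l‖)
        ≤ κ⁻¹ * riNorm σ κ γ Φ :=
  riPotential_decay_bounds_general σ κ γ hσ hκ hγ Φ hΦ hsum

end
end
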